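/- Let G ≅ (ℤ/5ℤ)² with automorphism σ satisfying σ⁵ = id and the norm relation A^(1+σ+σ²+σ³+σ⁴) = 1 for all A ∈ G. If A ∈ G is not fixed by σ, then the element A^(σ³ + 3σ² + 2σ − 1) (computed in the ℤ[σ]-module structure on G) is fixed by σ. -/

import Mathlib

/-!
In characteristic 5, `σ ^ 5 = 1` gives `(σ - 1) ^ 5 = σ ^ 5 - 1 = 0`, so `σ - 1` is nilpotent on the
2-dimensional `𝔽₅`-space `G` and therefore `(σ - 1) ^ 2 = 0`. Modulo `(σ - 1) ^ 2` and `5`, the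
operator `σ³ + 3σ² + 2σ - 1` reduces to `σ - 1`, so `B = A ^ (σ - 1)` and `B ^ (σ - 1) = 1`.
-/

open Module Polynomial

theorem Module.End.isNilpotent_sub_one_of_pow_eq_one {R M : Type*} [CommRing R] [AddCommGroup M]
    [Module R M] (p : ℕ) [Fact p.Prime] [CharP R p] {f : Module.End R M} (hf : f ^ p = 1) :
    IsNilpotent (f - 1) :=
  ⟨p, by simpa [hf] using congrArg (aeval f) (sub_pow_char (X : R[X]) 1)⟩

theorem IsNilpotent.pow_finrank_eq_zero {R M : Type*} [CommRing R] [IsDomain R] [AddCommGroup M]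
    [Module R M] [Module.Finite R M] [Module.Free R M] {f : Module.End R M} (hf : IsNilpotent f) :
    f ^ finrank R M = 0 := by
  rw [← aeval_X_pow (R := R), ← hf.charpoly_eq_X_pow_finrank, LinearMap.aeval_self_charpoly]

theorem cubic_eq_sub_one_of_sub_one_sq_eq_zero {R : Type*} [Ring R] (h5 : (5 : R) = 0) {t : R}
    (ht : (t - 1) ^ 2 = 0) : t ^ 3 + 3 * t ^ 2 + 2 * t - 1 = t - 1 := by
  have h : t ^ 3 + 3 * t ^ 2 + 2 * t - 1 - (t - 1) = (t + 5) * (t - 1) ^ 2 + 5 * (2 * t - 1) := by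
    noncomm_ring; norm_num
  rwa [ht, h5, mul_zero, zero_mul, add_zero, sub_eq_zero] at h

theorem Module.End.mul_cubic_eq_cubic {K V : Type*} [Field K] [CharP K 5] [AddCommGroup V]
    [Module K V] [FiniteDimensional K V] (hV : finrank K V = 2) {f : Module.End K V}
    (hf : f ^ 5 = 1) :
    f * (f ^ 3 + 3 * f ^ 2 + 2 * f - 1) = f ^ 3 + 3 * f ^ 2 + 2 * f - 1 := by
  have : Fact (Nat.Prime 5) := ⟨by norm_num⟩
  have h5 : (5 : Module.End K V) = 0 := by
    ext v; simp [← Nat.cast_smul_eq_nsmul K, CharP.ofNat_eq_zero]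
  have hsq : (f - 1) ^ 2 = 0 := hV ▸ (f.isNilpotent_sub_one_of_pow_eq_one 5 hf).pow_finrank_eq_zero
  rw [cubic_eq_sub_one_of_sub_one_sq_eq_zero h5 hsq, ← sub_eq_zero, ← sub_one_mul, ← sq, hsq]

namespace MulAut

variable {G V : Type*} [Group G] [AddCommGroup V] (n : ℕ) [Module (ZMod n) V]

def toZModEnd (φ : G ≃* Multiplicative V) : MulAut G →* Module.End (ZMod n) V where
  toFun σ :=
    (AddMonoidHom.mk' (fun v ↦ (φ (σ (φ.symm (.ofAdd v)))).toAdd) (by simp)).toZModLinearMap n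
  map_one' := by ext; simp
  map_mul' σ τ := by ext; simp

theorem toAdd_apply_eq_toZModEnd_apply (φ : G ≃* Multiplicative V) (σ : MulAut G) (g : G) :
    (φ (σ g)).toAdd = toZModEnd n φ σ (φ g).toAdd := by
  simp [toZModEnd]

end MulAut

theorem stmt2_general (G : Type*) [Group G]
    (e : G ≃* Multiplicative (ZMod 5) × Multiplicative (ZMod 5))
    (σ : MulAut G) (hσ : σ ^ 5 = 1)
    (A : G) :
    σ ((σ ^ 3) A * ((σ ^ 2) A) ^ 3 * (σ A) ^ 2 * A⁻¹)
      = (σ ^ 3) A * ((σ ^ 2) A) ^ 3 * (σ A) ^ 2 * A⁻¹ := by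
  have : Fact (Nat.Prime 5) := ⟨by norm_num⟩
  let φ : G ≃* Multiplicative (ZMod 5 × ZMod 5) := e.trans (MulEquiv.prodMultiplicative _ _).symm
  have hτ : MulAut.toZModEnd 5 φ σ ^ 5 = 1 := by rw [← map_pow, hσ, map_one]
  have hV : finrank (ZMod 5) (ZMod 5 × ZMod 5) = 2 := by rw [finrank_prod, finrank_self]
  have key := LinearMap.congr_fun (Module.End.mul_cubic_eq_cubic hV hτ) (φ A).toAdd
  apply φ.injective
  apply Multiplicative.toAdd.injective
  simp only [map_mul, map_pow, map_inv, toAdd_mul, toAdd_pow, toAdd_inv,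
    MulAut.toAdd_apply_eq_toZModEnd_apply 5]
  simpa [← Nat.cast_smul_eq_nsmul (ZMod 5), sub_eq_add_neg] using key

/-- If `G ≅ (ℤ/5ℤ)²` with automorphism `σ` satisfying `σ⁵ = id` and the norm relation,
and `A ∈ G` is not fixed by `σ`, then `A^(σ³ + 3σ² + 2σ - 1)` is fixed by `σ`. -/
theorem stmt2 (G : Type*) [Group G]
    (e : G ≃* Multiplicative (ZMod 5) × Multiplicative (ZMod 5))
    (σ : MulAut G) (hσ : σ ^ 5 = 1)
    (hnorm : ∀ A : G, A * σ A * (σ ^ 2) A * (σ ^ 3) A * (σ ^ 4) A = 1)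
    (A : G) (hA : σ A ≠ A) :
    σ ((σ ^ 3) A * ((σ ^ 2) A) ^ 3 * (σ A) ^ 2 * A⁻¹)
      = (σ ^ 3) A * ((σ ^ 2) A) ^ 3 * (σ A) ^ 2 * A⁻¹ :=
  stmt2_general G e σ hσ A
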